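/- Evaluating the separating form: with σ_i = ⧢_{j≠i}(a_{ij} π^{()} + b_{ij} π^{I_{ij}}) as constructed, for any group-like x_l in the range of the signature map, σ_i(x_l) = ∏_{j≠i} (π^{I_{ij}}(x_j) - π^{I_{ij}}(x_l)) / (π^{I_{ij}}(x_j) - π^{I_{ij}}(x_i)); in particular σ_i(x_i) = 1 and σ_i(x_l) = 0 for l ≠ i. -/

import Mathlib

open MeasureTheory Set

/-- Iterated integral of a path against its derivative; the head letter is integrated
outermost (so this corresponds to the reversed word). -/
noncomputable def iterInt {d : ℕ} (X : ℝ → Fin d → ℝ) (a : ℝ) : List (Fin d) → ℝ → ℝ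
  | [], _ => 1
  | i :: I, b => ∫ u in a..b, iterInt X a I u * deriv (fun s => X s i) u

/-- Coordinate iterated integral `π^I(S(X))` over `[a,b]` for the word `I = (i₁,…,iₙ)`
(innermost integration first). -/
noncomputable def sigCoord {d : ℕ} (X : ℝ → Fin d → ℝ) (a b : ℝ) (I : List (Fin d)) : ℝ :=
  iterInt X a I.reverse b

/-- The signature of a path over `[a,b]`, as the family of its coordinate iterated
integrals indexed by words; this represents an element of the tensor algebra `T((ℝ^d))`. -/
noncomputable def Sig {d : ℕ} (X : ℝ → Fin d → ℝ) (a b : ℝ) : List (Fin d) → ℝ :=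
  fun I => sigCoord X a b I

/-- The product of the tensor algebra `T((ℝ^d))` in coordinates. -/
noncomputable def tmul {d : ℕ} (x y : List (Fin d) → ℝ) : List (Fin d) → ℝ :=
  fun w => ∑ k ∈ Finset.range (w.length + 1), x (w.take k) * y (w.drop k)

/-- The unit of the tensor algebra. -/
def tunit {d : ℕ} : List (Fin d) → ℝ := fun w => if w = [] then 1 else 0

/-- The tensor exponential `exp(v) = Σ v^{⊗n}/n!` in coordinates. -/
noncomputable def texp {d : ℕ} (v : Fin d → ℝ) : List (Fin d) → ℝ :=
  fun w => (w.map v).prod / w.length.factorial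

/-- The multiset of shuffles of two words. -/
def shuffles {α : Type*} : List α → List α → Multiset (List α)
  | [], v => {v}
  | u, [] => {u}
  | a :: u, b :: v => ((shuffles u (b :: v)).map (a :: ·)) + ((shuffles (a :: u) v).map (b :: ·))
  termination_by u v => u.length + v.length

/-- `x` is in the range of the signature map on continuous bounded-variation paths. -/
def IsSignature {d : ℕ} (x : List (Fin d) → ℝ) : Prop :=
  ∃ (X : ℝ → Fin d → ℝ) (a b : ℝ), a ≤ b ∧ ContinuousOn X (Set.Icc a b) ∧
    BoundedVariationOn X (Set.Icc a b) ∧ x = Sig X a b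

/-- Evaluation of a (finitely supported) linear form on `T((ℝ^d))`. -/
noncomputable def formEval {d : ℕ} (f : List (Fin d) →₀ ℝ) (x : List (Fin d) → ℝ) : ℝ :=
  f.sum fun w c => c * x w

/-- The shuffle product of two linear forms, extended bilinearly from words. -/
noncomputable def shuffleForm {d : ℕ} (f g : List (Fin d) →₀ ℝ) : List (Fin d) →₀ ℝ :=
  f.sum fun u cu => g.sum fun v cv =>
    (cu * cv) • ((shuffles u v).map fun w => Finsupp.single w (1 : ℝ)).sum

/-!
Evaluation against a fixed `y` is linear in the form, and when `y` is group-like it turns the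
shuffle product of forms into the product of their values. Hence `σᵢ(x_l)` is the product of
the values `a_{ij} + b_{ij} π^{I_{ij}}(x_l)`, each of which is
`(π^{I_{ij}}(x_j) - π^{I_{ij}}(x_l)) / (π^{I_{ij}}(x_j) - π^{I_{ij}}(x_i))`.

Signatures are group-like: the derivative of each coordinate of a bounded-variation path is
integrable, so every iterated integral is the primitive of an integrable function and hence
absolutely continuous, and integration by parts gives the shuffle identity by induction on the
total length of the two words. Since `Sig` reads words backwards, one also needs that reversal
maps the shuffles of `u` and `v` onto the shuffles of their reversals.
-/

section Shuffles

variable {α : Type*}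

@[simp] lemma shuffles_nil_left (v : List α) : shuffles [] v = {v} := by
  rw [shuffles]

@[simp] lemma shuffles_nil_right (u : List α) : shuffles u [] = {u} := by
  cases u <;> simp [shuffles]

lemma shuffles_cons_cons (a b : α) (u v : List α) :
    shuffles (a :: u) (b :: v)
      = (shuffles u (b :: v)).map (a :: ·) + (shuffles (a :: u) v).map (b :: ·) := by
  rw [shuffles]

lemma shuffles_append_singleton (a b : α) : ∀ u v : List α,
    shuffles (u ++ [a]) (v ++ [b])
      = (shuffles u (v ++ [b])).map (· ++ [a]) + (shuffles (u ++ [a]) v).map (· ++ [b])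
  | [], [] => by simpa [shuffles_cons_cons] using Multiset.pair_comm _ _
  | [], c :: v => by
      have ih := shuffles_append_singleton a b [] v
      simp only [List.nil_append, List.cons_append] at ih ⊢
      rw [shuffles_cons_cons, ih]
      simpa [shuffles_cons_cons] using Multiset.cons_swap _ _ _
  | c :: u, [] => by
      have ih := shuffles_append_singleton a b u []
      simp only [List.nil_append, List.cons_append] at ih ⊢
      rw [shuffles_cons_cons, ih]
      simp [shuffles_cons_cons]
      abel
  | c :: u, e :: v => by
      have ihu := shuffles_append_singleton a b u (e :: v)
      have ihv := shuffles_append_singleton a b (c :: u) v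
      simp only [List.cons_append] at ihu ihv ⊢
      rw [shuffles_cons_cons, ihu, ihv, shuffles_cons_cons, shuffles_cons_cons]
      simp only [List.cons_append, Multiset.map_add, Multiset.map_map, Function.comp_def]
      abel
termination_by u v => u.length + v.length

lemma map_reverse_shuffles : ∀ u v : List α,
    (shuffles u v).map List.reverse = shuffles u.reverse v.reverse
  | [], v => by simp
  | c :: u, [] => by simp
  | c :: u, e :: v => by
      have hu := map_reverse_shuffles u (e :: v)
      have hv := map_reverse_shuffles (c :: u) v
      rw [List.reverse_cons] at hu hv
      rw [shuffles_cons_cons, List.reverse_cons, List.reverse_cons,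
        shuffles_append_singleton, ← hu, ← hv]
      simp
termination_by u v => u.length + v.length

end Shuffles

open intervalIntegral

section IntervalIntegrals

variable {ι E : Type*} [NormedAddCommGroup E] {μ : Measure ℝ} {a b : ℝ}

lemma IntervalIntegrable.multisetSum {m : Multiset ι} {F : ι → ℝ → E}
    (hF : ∀ w ∈ m, IntervalIntegrable (F w) μ a b) :
    IntervalIntegrable (fun x => (m.map fun w => F w x).sum) μ a b := by
  induction m using Multiset.induction_on with
  | empty => exact ⟨integrableOn_zero, integrableOn_zero⟩
  | cons w m ih =>
      simp only [Multiset.map_cons, Multiset.sum_cons]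
      exact (hF w (Multiset.mem_cons_self w m)).add
        (ih fun w' hw' => hF w' (Multiset.mem_cons_of_mem hw'))

lemma intervalIntegral.integral_multisetSum [NormedSpace ℝ E] {m : Multiset ι} {F : ι → ℝ → E}
    (hF : ∀ w ∈ m, IntervalIntegrable (F w) μ a b) :
    ∫ x in a..b, (m.map fun w => F w x).sum ∂μ = (m.map fun w => ∫ x in a..b, F w x ∂μ).sum := by
  induction m using Multiset.induction_on with
  | empty => simp
  | cons w m ih =>
      have hm : ∀ w' ∈ m, IntervalIntegrable (F w') μ a b :=
        fun w' hw' => hF w' (Multiset.mem_cons_of_mem hw')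
      simp only [Multiset.map_cons, Multiset.sum_cons]
      rw [integral_add (hF w (Multiset.mem_cons_self w m)) (IntervalIntegrable.multisetSum hm),
        ih hm]

/-- Integration by parts for the primitives `∫ a..x f` and `∫ a..x h`, which are absolutely
continuous with a.e. derivatives `f` and `h`. -/
lemma intervalIntegral.integral_mul_integral_eq {f h : ℝ → ℝ}
    (hf : IntervalIntegrable f volume a b) (hh : IntervalIntegrable h volume a b) :
    (∫ x in a..b, f x) * (∫ x in a..b, h x)
      = (∫ x in a..b, f x * ∫ y in a..x, h y) + ∫ x in a..b, (∫ y in a..x, f y) * h x := by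
  have hF := hf.absolutelyContinuousOnInterval_intervalIntegral left_mem_uIcc
  have hH := hh.absolutelyContinuousOnInterval_intervalIntegral left_mem_uIcc
  rw [← integral_add (hf.mul_continuousOn hH.continuousOn) (hh.continuousOn_mul hF.continuousOn),
    ← sub_zero ((∫ x in a..b, f x) * _), ← zero_mul (∫ x in a..a, h x), ← integral_same,
    ← hF.integral_deriv_mul_eq_sub hH]
  refine integral_congr_ae ?_
  filter_upwards [hf.ae_hasDerivAt_integral, hh.ae_hasDerivAt_integral] with x hfx hhx hx
  rw [(hfx (uIoc_subset_uIcc hx) a left_mem_uIcc).deriv,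
    (hhx (uIoc_subset_uIcc hx) a left_mem_uIcc).deriv]

end IntervalIntegrals

section IteratedIntegrals

variable {d : ℕ} {X : ℝ → Fin d → ℝ} {a : ℝ}

lemma intervalIntegrable_iterInt_mul_deriv {b : ℝ}
    (hX : ∀ i, IntervalIntegrable (deriv fun s => X s i) volume a b) (w : List (Fin d))
    (i : Fin d) :
    IntervalIntegrable (fun u => iterInt X a w u * deriv (fun s => X s i) u) volume a b := by
  induction w generalizing i with
  | nil => simpa [iterInt] using hX i
  | cons j w ih =>
      exact (hX i).continuousOn_mul
        ((ih j).absolutelyContinuousOnInterval_intervalIntegral left_mem_uIcc).continuousOn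

theorem iterInt_shuffles : ∀ (u v : List (Fin d)) (b : ℝ),
    (∀ i, IntervalIntegrable (deriv fun s => X s i) volume a b) →
      ((shuffles u v).map fun w => iterInt X a w b).sum = iterInt X a u b * iterInt X a v b
  | [], v, b, _ => by simp [iterInt]
  | c :: u, [], b, _ => by simp [iterInt]
  | c :: u, e :: v, b, hX => by
      have hint := intervalIntegrable_iterInt_mul_deriv hX
      have hX' : ∀ s ∈ uIcc a b, ∀ i, IntervalIntegrable (deriv fun r => X r i) volume a s :=
        fun s hs i => (hX i).mono_set (uIcc_subset_uIcc left_mem_uIcc hs)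
      calc ((shuffles (c :: u) (e :: v)).map fun w => iterInt X a w b).sum
          = ((shuffles u (e :: v)).map fun w =>
                ∫ s in a..b, iterInt X a w s * deriv (fun r => X r c) s).sum
            + ((shuffles (c :: u) v).map fun w =>
                ∫ s in a..b, iterInt X a w s * deriv (fun r => X r e) s).sum := by
            simp only [shuffles_cons_cons, Multiset.map_add, Multiset.sum_add, Multiset.map_map,
              Function.comp_def, iterInt]
        _ = (∫ s in a..b, iterInt X a u s * iterInt X a (e :: v) s * deriv (fun r => X r c) s)
            + ∫ s in a..b, iterInt X a (c :: u) s * iterInt X a v s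
                * deriv (fun r => X r e) s := by
            rw [← integral_multisetSum fun w _ => hint w c,
              ← integral_multisetSum fun w _ => hint w e]
            congr 1 <;> refine integral_congr fun s hs => ?_
            · simp only [Multiset.sum_map_mul_right, iterInt_shuffles u (e :: v) s (hX' s hs)]
            · simp only [Multiset.sum_map_mul_right, iterInt_shuffles (c :: u) v s (hX' s hs)]
        _ = iterInt X a (c :: u) b * iterInt X a (e :: v) b := by
            rw [iterInt, iterInt, integral_mul_integral_eq (hint u c) (hint v e)]
            congr 1 <;> refine integral_congr fun s _ => ?_ <;> simp only [iterInt] <;> ring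
termination_by u v => u.length + v.length

end IteratedIntegrals

lemma sig_shuffles {d : ℕ} {X : ℝ → Fin d → ℝ} {a b : ℝ}
    (hX : ∀ i, IntervalIntegrable (deriv fun s => X s i) volume a b) (u v : List (Fin d)) :
    ((shuffles u v).map (Sig X a b)).sum = Sig X a b u * Sig X a b v := by
  have hrev : (shuffles u v).map (Sig X a b)
      = ((shuffles u v).map List.reverse).map fun w => iterInt X a w b := by
    rw [Multiset.map_map]
    rfl
  rw [hrev, map_reverse_shuffles, iterInt_shuffles _ _ b hX]
  rfl

structure IsGroupLike {α : Type*} (x : List α → ℝ) : Prop where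
  map_shuffles : ∀ u v, ((shuffles u v).map x).sum = x u * x v
  map_nil : x [] = 1

lemma IsSignature.isGroupLike {d : ℕ} {x : List (Fin d) → ℝ} (hx : IsSignature x) :
    IsGroupLike x := by
  obtain ⟨X, a, b, hab, -, hBV, rfl⟩ := hx
  have hX (i : Fin d) : IntervalIntegrable (deriv fun s => X s i) volume a b := by
    refine BoundedVariationOn.intervalIntegrable_deriv ?_
    rw [uIcc_of_le hab]
    exact (LipschitzWith.eval i).comp_boundedVariationOn hBV
  exact ⟨sig_shuffles hX, rfl⟩

section LinearForms

variable {d : ℕ} {y : List (Fin d) → ℝ}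

lemma formEval_eq_linearCombination (f : List (Fin d) →₀ ℝ) :
    formEval f y = Finsupp.linearCombination ℝ y f :=
  rfl

lemma IsGroupLike.formEval_shuffleForm (hy : IsGroupLike y) (f g : List (Fin d) →₀ ℝ) :
    formEval (shuffleForm f g) y = formEval f y * formEval g y := by
  simp only [formEval_eq_linearCombination, shuffleForm, map_finsuppSum, _root_.map_smul,
    map_multiset_sum, Multiset.map_map, Function.comp_def, Finsupp.linearCombination_single,
    smul_eq_mul, one_mul, hy.map_shuffles]
  rw [← formEval_eq_linearCombination, ← formEval_eq_linearCombination, formEval, formEval,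
    Finsupp.sum_mul]
  refine Finsupp.sum_congr fun u _ => ?_
  rw [Finsupp.mul_sum]
  exact Finsupp.sum_congr fun v _ => by ring

lemma IsGroupLike.formEval_foldr_shuffleForm (hy : IsGroupLike y) {ι : Type*} (L : List ι)
    (A B : ι → ℝ) (w : ι → List (Fin d)) :
    formEval (L.foldr (fun j acc => shuffleForm
        (A j • Finsupp.single [] 1 + B j • Finsupp.single (w j) 1) acc) (Finsupp.single [] 1)) y
      = (L.map fun j => A j + B j * y (w j)).prod := by
  induction L with
  | nil => simp [formEval, hy.map_nil]
  | cons j L ih =>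
      rw [List.foldr_cons, hy.formEval_shuffleForm, ih, List.map_cons, List.prod_cons]
      simp [formEval_eq_linearCombination, hy.map_nil]

end LinearForms

theorem eval_separating_form_general {d n : ℕ} (x : Fin n → (List (Fin d) → ℝ))
    (hsig : ∀ i, IsSignature (x i))
    (I : Fin n → Fin n → List (Fin d))
    (hsep : ∀ i j, i ≠ j → x i (I i j) ≠ x j (I i j))
    (aC bC : Fin n → Fin n → ℝ)
    (ha : ∀ i j, aC i j = x j (I i j) / (x j (I i j) - x i (I i j)))
    (hb : ∀ i j, bC i j = -1 / (x j (I i j) - x i (I i j)))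
    (i : Fin n) :
    let σi : List (Fin d) →₀ ℝ :=
      ((Finset.univ.erase i).toList).foldr
        (fun j acc => shuffleForm
          (aC i j • Finsupp.single ([] : List (Fin d)) (1:ℝ)
            + bC i j • Finsupp.single (I i j) (1:ℝ)) acc)
        (Finsupp.single ([] : List (Fin d)) (1:ℝ))
    (∀ l, formEval σi (x l)
        = ∏ j ∈ Finset.univ.erase i,
            (x j (I i j) - x l (I i j)) / (x j (I i j) - x i (I i j))) ∧
    formEval σi (x i) = 1 ∧ ∀ l, l ≠ i → formEval σi (x l) = 0 := by
  intro σi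
  have eval_σi (l : Fin n) : formEval σi (x l)
      = ∏ j ∈ Finset.univ.erase i,
          (x j (I i j) - x l (I i j)) / (x j (I i j) - x i (I i j)) := by
    rw [(hsig l).isGroupLike.formEval_foldr_shuffleForm, Finset.prod_map_toList]
    refine Finset.prod_congr rfl fun j _ => ?_
    rw [ha, hb]
    ring
  refine ⟨eval_σi, ?_, fun l hl => ?_⟩
  · rw [eval_σi]
    refine Finset.prod_eq_one fun j hj => div_self ?_
    exact sub_ne_zero.2 (hsep i j (Finset.ne_of_mem_erase hj).symm).symm
  · rw [eval_σi]
    exact Finset.prod_eq_zero (Finset.mem_erase.2 ⟨hl, Finset.mem_univ l⟩) (by simp)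

/-- evaluation of the separating shuffle-polynomial form
`σ_i = ⧢_{j≠i}(a_{ij} π^{()} + b_{ij} π^{I_{ij}})` at group-like elements. -/
theorem eval_separating_form {d n : ℕ} (x : Fin n → (List (Fin d) → ℝ))
    (hsig : ∀ i, IsSignature (x i)) (hdist : ∀ i j, i ≠ j → x i ≠ x j)
    (I : Fin n → Fin n → List (Fin d))
    (hsep : ∀ i j, i ≠ j → x i (I i j) ≠ x j (I i j))
    (aC bC : Fin n → Fin n → ℝ)
    (ha : ∀ i j, aC i j = x j (I i j) / (x j (I i j) - x i (I i j)))
    (hb : ∀ i j, bC i j = -1 / (x j (I i j) - x i (I i j)))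
    (i : Fin n) :
    let σi : List (Fin d) →₀ ℝ :=
      ((Finset.univ.erase i).toList).foldr
        (fun j acc => shuffleForm
          (aC i j • Finsupp.single ([] : List (Fin d)) (1:ℝ)
            + bC i j • Finsupp.single (I i j) (1:ℝ)) acc)
        (Finsupp.single ([] : List (Fin d)) (1:ℝ))
    (∀ l, formEval σi (x l)
        = ∏ j ∈ Finset.univ.erase i,
            (x j (I i j) - x l (I i j)) / (x j (I i j) - x i (I i j))) ∧
    formEval σi (x i) = 1 ∧ ∀ l, l ≠ i → formEval σi (x l) = 0 :=
  eval_separating_form_general x hsig I hsep aC bC ha hb i
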